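/- arXiv:1707.02191 — 2 statements merged into one kernel-verified Lean document; each statement's English description precedes it below -/
import Mathlib

section
/- Let ψ ∈ L¹(ℝ³,ℂ) ∩ L²(ℝ³,ℂ), let n ↦ R_n be a measurable choice of rotations R_n ∈ SO(3) with R_n e_z = n, and let f ∈ L¹(ℝ³,ℂ) ∩ L²(ℝ³,ℂ). Then for almost every ω ∈ ℝ³ the Fourier-domain reconstruction identity holds: ∫_{S²} (𝓕ψ)(R_nᵀω) · 𝓕[x ↦ (W_ψ f)(x,n)](ω) dσ(n) = M_ψ(ω) (𝓕f)(ω). In particular, if δ ≤ M_ψ ≤ M on the support of 𝓕f for some δ, M > 0, then 𝓕f, and hence f, is recovered exactly from W_ψ f by dividing this integral by M_ψ. -/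
open MeasureTheory Real

noncomputable section

/-- 3D Euclidean space. -/
abbrev R3 : Type := EuclideanSpace ℝ (Fin 3)

/-- The unit sphere `S² ⊂ ℝ³`. -/
abbrev S2 : Type := Metric.sphere (0 : R3) 1

/-- The surface measure `σ` on the unit sphere `S²`. -/
def σS2 : Measure S2 := (volume : Measure R3).toSphere

/-- The unit vector `e_z`. -/
def ez : R3 := EuclideanSpace.single 2 1

/-- The orientation score transform
`(W_ψ f)(x,n) = ∫ conj(ψ(R_nᵀ(x'-x))) f(x') dx'`, where `R_nᵀ = R_n⁻¹ = (Rn n).symm`. -/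
def OScore (Rn : S2 → (R3 ≃ₗᵢ[ℝ] R3)) (ψ f : R3 → ℂ) (x : R3) (n : S2) : ℂ :=
  ∫ x', (starRingEnd ℂ) (ψ ((Rn n).symm (x' - x))) * f x'

/-- `M_ψ(ω) = ∫_{S²} |𝓕ψ(R_nᵀ ω)|² dσ(n)`. -/
def Mpsi (Rn : S2 → (R3 ≃ₗᵢ[ℝ] R3)) (ψ : R3 → ℂ) (ω : R3) : ℝ :=
  ∫ n, ‖FourierTransform.fourier ψ ((Rn n).symm ω)‖ ^ 2 ∂σS2

/-- `N_ψ(ω) = ∫_{S²} 𝓕ψ(R_nᵀ ω) dσ(n)`. -/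
def Npsi (Rn : S2 → (R3 ≃ₗᵢ[ℝ] R3)) (ψ : R3 → ℂ) (ω : R3) : ℂ :=
  ∫ n, FourierTransform.fourier ψ ((Rn n).symm ω) ∂σS2

/-!
The orientation score at a fixed orientation `n` is the cross-correlation of `f` with the rotated
wavelet `ψ ∘ R_nᵀ`, i.e. the convolution of `f` with `x ↦ conj (ψ (R_nᵀ (-x)))`. By the
convolution theorem and the rotation invariance of the Fourier transform its Fourier transform is
`conj (𝓕ψ (R_nᵀ ω)) * 𝓕f ω`, so multiplying by `𝓕ψ (R_nᵀ ω)` and integrating over the sphere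
gives `M_ψ(ω) 𝓕f(ω)` at every `ω`. Dividing by `M_ψ ≥ δ > 0` recovers `𝓕f` on its support.
-/

open FourierTransform ComplexConjugate Convolution

namespace Real

variable {V : Type*} [NormedAddCommGroup V] [InnerProductSpace ℝ V] [FiniteDimensional ℝ V]
  [MeasurableSpace V] [BorelSpace V]

theorem conj_fourier (g : V → ℂ) (w : V) :
    conj (𝓕 g w) = 𝓕 (fun v => conj (g (-v))) w := by
  rw [← fourierInv_eq_fourier_comp_neg (fun v => conj (g v)), fourier_eq, fourierInv_eq,
    ← integral_conj]
  congr 1 with v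
  simp [Circle.smul_def, ← Circle.coe_inv_eq_conj, AddChar.map_neg_eq_inv]

theorem fourier_integral_conj_sub_mul {g f : V → ℂ} (hg : Integrable g) (hf : Integrable f)
    (w : V) :
    𝓕 (fun x => ∫ y, conj (g (y - x)) * f y) w = conj (𝓕 g w) * 𝓕 f w := by
  have hg' : Integrable (fun v => conj (g (-v))) :=
    Complex.conjCLE.toContinuousLinearMap.integrable_comp hg.comp_neg
  have h_conv : (fun x => ∫ y, conj (g (y - x)) * f y)
      = f ⋆[ContinuousLinearMap.mul ℂ ℂ] fun v => conj (g (-v)) := by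
    ext x
    simp [convolution_def, neg_sub, mul_comm]
  rw [h_conv, fourier_mul_convolution_eq hf hg', conj_fourier, mul_comm]

end Real

section OrientationScore

variable {ψ f : R3 → ℂ} (Rn : S2 → (R3 ≃ₗᵢ[ℝ] R3))

theorem fourier_OScore (hψ : Integrable ψ) (hf : Integrable f) (n : S2) (ω : R3) :
    𝓕 (fun x => OScore Rn ψ f x n) ω = conj (𝓕 ψ ((Rn n).symm ω)) * 𝓕 f ω := by
  have hψn : Integrable (ψ ∘ (Rn n).symm) :=
    (Rn n).symm.measurePreserving.integrable_comp_of_integrable hψ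
  rw [← Real.fourier_comp_linearIsometry]
  exact Real.fourier_integral_conj_sub_mul hψn hf ω

theorem integral_fourier_mul_fourier_OScore (hψ : Integrable ψ) (hf : Integrable f) (ω : R3) :
    ∫ n, 𝓕 ψ ((Rn n).symm ω) * 𝓕 (fun x => OScore Rn ψ f x n) ω ∂σS2
      = (Mpsi Rn ψ ω : ℂ) * 𝓕 f ω := by
  simp_rw [fourier_OScore Rn hψ hf, ← mul_assoc, Complex.mul_conj', ← Complex.ofReal_pow]
  rw [integral_mul_const, integral_complex_ofReal, Mpsi]

end OrientationScore

theorem orientation_score_fourier_reconstruction_general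
    (ψ : R3 → ℂ) (hψ1 : MemLp ψ 1 (volume : Measure R3))
    (Rn : S2 → (R3 ≃ₗᵢ[ℝ] R3))
    (f : R3 → ℂ) (hf1 : MemLp f 1 (volume : Measure R3)) :
    (∀ᵐ ω ∂(volume : Measure R3),
        ∫ n, FourierTransform.fourier ψ ((Rn n).symm ω)
              * FourierTransform.fourier (fun x => OScore Rn ψ f x n) ω ∂σS2
          = (Mpsi Rn ψ ω : ℂ) * FourierTransform.fourier f ω)
    ∧ (∀ δ M : ℝ, 0 < δ →
        (∀ ω ∈ Function.support (FourierTransform.fourier f), δ ≤ Mpsi Rn ψ ω ∧ Mpsi Rn ψ ω ≤ M) →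
        ∀ᵐ ω ∂(volume : Measure R3),
          FourierTransform.fourier f ω
            = (∫ n, FourierTransform.fourier ψ ((Rn n).symm ω)
                  * FourierTransform.fourier (fun x => OScore Rn ψ f x n) ω ∂σS2)
              / (Mpsi Rn ψ ω : ℂ)) := by
  have hidentity := integral_fourier_mul_fourier_OScore Rn
    (memLp_one_iff_integrable.mp hψ1) (memLp_one_iff_integrable.mp hf1)
  refine ⟨.of_forall hidentity, fun δ M hδ hsupp => .of_forall fun ω => ?_⟩
  rw [hidentity]
  by_cases hω : 𝓕 f ω = 0
  · simp [hω]
  · have hM : (Mpsi Rn ψ ω : ℂ) ≠ 0 :=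
      Complex.ofReal_ne_zero.mpr (hδ.trans_le (hsupp ω hω).1).ne'
    rw [mul_div_cancel_left₀ _ hM]

/-- Fourier-domain reconstruction identity:
`∫_{S²} 𝓕ψ(R_nᵀω) · 𝓕[x ↦ (W_ψ f)(x,n)](ω) dσ(n) = M_ψ(ω) 𝓕f(ω)` for a.e. `ω`; in particular,
if `δ ≤ M_ψ ≤ M` on the support of `𝓕f`, then `𝓕f` is recovered by dividing by `M_ψ`. -/
theorem orientation_score_fourier_reconstruction
    (ψ : R3 → ℂ) (hψ1 : MemLp ψ 1 (volume : Measure R3)) (hψ2 : MemLp ψ 2 (volume : Measure R3))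
    (Rn : S2 → (R3 ≃ₗᵢ[ℝ] R3))
    (hdet : ∀ n : S2, LinearMap.det ((Rn n).toLinearEquiv : R3 →ₗ[ℝ] R3) = 1)
    (hRez : ∀ n : S2, Rn n ez = (n : R3))
    (hmeas : Measurable fun p : S2 × R3 => (Rn p.1).symm p.2)
    (f : R3 → ℂ) (hf1 : MemLp f 1 (volume : Measure R3)) (hf2 : MemLp f 2 (volume : Measure R3)) :
    (∀ᵐ ω ∂(volume : Measure R3),
        ∫ n, FourierTransform.fourier ψ ((Rn n).symm ω)
              * FourierTransform.fourier (fun x => OScore Rn ψ f x n) ω ∂σS2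
          = (Mpsi Rn ψ ω : ℂ) * FourierTransform.fourier f ω)
    ∧ (∀ δ M : ℝ, 0 < δ →
        (∀ ω ∈ Function.support (FourierTransform.fourier f), δ ≤ Mpsi Rn ψ ω ∧ Mpsi Rn ψ ω ≤ M) →
        ∀ᵐ ω ∂(volume : Measure R3),
          FourierTransform.fourier f ω
            = (∫ n, FourierTransform.fourier ψ ((Rn n).symm ω)
                  * FourierTransform.fourier (fun x => OScore Rn ψ f x n) ω ∂σS2)
              / (Mpsi Rn ψ ω : ℂ)) :=
  orientation_score_fourier_reconstruction_general ψ hψ1 Rn f hf1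
end
end

section
/- Let ψ ∈ L¹(ℝ³,ℂ) ∩ L²(ℝ³,ℂ), let n ↦ R_n be a measurable choice of rotations R_n ∈ SO(3) with R_n e_z = n, and let f ∈ L¹(ℝ³,ℂ) ∩ L²(ℝ³,ℂ). Define the orientation-integrated score A_ψ f (x) = ∫_{S²} (W_ψ f)(x,n) dσ(n). Then for almost every ω ∈ ℝ³ one has 𝓕[A_ψ f](ω) = conj(N_ψ(ω)) · (𝓕f)(ω), where N_ψ(ω) = ∫_{S²} (𝓕ψ)(R_nᵀ ω) dσ(n). -/
open MeasureTheory Real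

noncomputable section

open scoped FourierTransform RealInnerProductSpace ComplexConjugate ENNReal Convolution

/-! For a fixed rotation `R`, `x ↦ (W_ψ f)(x, n)` is the convolution of `f` with
`y ↦ conj ψ(-R⁻¹ y)`, whose Fourier transform is `conj (𝓕ψ (R⁻¹ ω))`; so the Fourier transform of
the score is `conj (𝓕ψ (R_n⁻¹ ω)) · 𝓕f(ω)` for each `n`. The kernel
`(x, n, x') ↦ conj ψ(R_n⁻¹(x' - x)) f(x')` has `L¹` norm `σ(S²) ‖ψ‖₁ ‖f‖₁`, so by Fubini the Fourier
transform commutes with the integral over `S²`, and the identity holds for every `ω`. -/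

theorem lintegral_lintegral_comp_sub_mul {G : Type*} [AddGroup G] [MeasurableSpace G]
    [MeasurableAdd₂ G] [MeasurableNeg G] {μ : Measure G} [SFinite μ] [μ.IsAddLeftInvariant]
    [μ.IsNegInvariant] {g h : G → ℝ≥0∞} (hg : Measurable g) (hh : Measurable h) :
    ∫⁻ x, ∫⁻ x', g (x' - x) * h x' ∂μ ∂μ = (∫⁻ x, g x ∂μ) * ∫⁻ x, h x ∂μ := by
  rw [lintegral_lintegral_swap (by fun_prop)]
  calc ∫⁻ x', ∫⁻ x, g (x' - x) * h x' ∂μ ∂μ = ∫⁻ x', (∫⁻ x, g (x' - x) ∂μ) * h x' ∂μ :=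
        lintegral_congr fun x' => lintegral_mul_const _ (by fun_prop)
    _ = (∫⁻ x, g x ∂μ) * ∫⁻ x, h x ∂μ := by
        simp_rw [lintegral_sub_left_eq_self]
        exact lintegral_const_mul _ hh

section InnerProductSpace

variable {V : Type*} [NormedAddCommGroup V] [InnerProductSpace ℝ V] [FiniteDimensional ℝ V]
  [MeasurableSpace V] [BorelSpace V]

/-- `OScore Rn ψ f x n` is `correlation (ψ ∘ (Rn n).symm) f x` by definition. -/
def correlation (ψ f : V → ℂ) (x : V) : ℂ :=
  ∫ x', conj (ψ (x' - x)) * f x'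

theorem correlation_eq_convolution (ψ f : V → ℂ) :
    correlation ψ f = (fun y => conj (ψ (-y))) ⋆[ContinuousLinearMap.mul ℂ ℂ] f := by
  ext x
  simp [correlation, convolution_eq_swap]

theorem correlation_congr_ae {ψ ψ' f f' : V → ℂ} (hψ : ψ =ᵐ[volume] ψ') (hf : f =ᵐ[volume] f') :
    correlation ψ f = correlation ψ' f' := by
  ext x
  refine integral_congr_ae ?_
  filter_upwards [(measurePreserving_sub_right volume x).quasiMeasurePreserving.ae_eq_comp hψ, hf]
    with x' hψx' hfx'
  simp only [Function.comp_apply] at hψx'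
  rw [hψx', hfx']

theorem Real.fourier_conj_comp_neg (ψ : V → ℂ) (ξ : V) :
    𝓕 (fun y => conj (ψ (-y))) ξ = conj (𝓕 ψ ξ) := by
  simp only [Real.fourier_eq, ← integral_conj]
  rw [← integral_neg_eq_self]
  congr 1 with y
  simp [Circle.smul_def, ← Circle.coe_inv_eq_conj, AddChar.map_neg_eq_inv]

theorem Real.fourier_correlation {ψ f : V → ℂ} (hψ : Integrable ψ) (hf : Integrable f) (ξ : V) :
    𝓕 (correlation ψ f) ξ = conj (𝓕 ψ ξ) * 𝓕 f ξ := by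
  have hψ' : Integrable (fun y => conj (ψ (-y))) :=
    Complex.conjCLE.toContinuousLinearMap.integrable_comp hψ.comp_neg
  rw [correlation_eq_convolution, Real.fourier_mul_convolution_eq hψ' hf,
    Real.fourier_conj_comp_neg]

variable {Ω : Type*} [MeasurableSpace Ω] {ν : Measure Ω}

theorem Real.fourier_integral_comm {E : Type*} [NormedAddCommGroup E] [NormedSpace ℂ E]
    [SFinite ν] {K : V × Ω → E} (hK : Integrable K (volume.prod ν)) (ξ : V) :
    𝓕 (fun x => ∫ n, K (x, n) ∂ν) ξ = ∫ n, 𝓕 (fun x => K (x, n)) ξ ∂ν := by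
  have hchar : Continuous fun x : V => ((𝐞 (-⟪x, ξ⟫) : Circle) : ℂ) := by fun_prop
  have hmod : Integrable (fun p : V × Ω => ((𝐞 (-⟪p.1, ξ⟫) : Circle) : ℂ) • K p)
      (volume.prod ν) :=
    hK.mono ((hchar.measurable.comp measurable_fst).aestronglyMeasurable.smul
      hK.aestronglyMeasurable) (.of_forall fun p => by rw [norm_smul, Circle.norm_coe, one_mul])
  simp only [Real.fourier_eq, Circle.smul_def]
  rw [← integral_integral_swap hmod]
  simp_rw [integral_smul]

variable [IsFiniteMeasure ν] {R : Ω → V ≃ₗᵢ[ℝ] V}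

theorem integrable_correlation_integrand_rotate
    (hR : Measurable fun p : Ω × V => (R p.1).symm p.2) {ψ f : V → ℂ}
    (hψm : StronglyMeasurable ψ) (hfm : StronglyMeasurable f)
    (hψ : Integrable ψ) (hf : Integrable f) :
    Integrable (fun q : (V × Ω) × V => conj (ψ ((R q.1.2).symm (q.2 - q.1.1))) * f q.2)
      ((volume.prod ν).prod volume) := by
  have hRsub : Measurable fun q : (V × Ω) × V => (R q.1.2).symm (q.2 - q.1.1) :=
    hR.comp (measurable_fst.snd.prodMk (measurable_snd.sub measurable_fst.fst))
  have hψR : Measurable fun q : (V × Ω) × V => ψ ((R q.1.2).symm (q.2 - q.1.1)) :=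
    hψm.measurable.comp hRsub
  have hfm' : Measurable fun q : (V × Ω) × V => f q.2 := hfm.measurable.comp measurable_snd
  have hnorm : Measurable fun q : (V × Ω) × V =>
      ‖ψ ((R q.1.2).symm (q.2 - q.1.1))‖ₑ * ‖f q.2‖ₑ :=
    hψR.enorm.mul hfm'.enorm
  refine ⟨((Complex.continuous_conj.measurable.comp hψR).mul hfm').aestronglyMeasurable, ?_⟩
  calc ∫⁻ q, ‖conj (ψ ((R q.1.2).symm (q.2 - q.1.1))) * f q.2‖ₑ ∂(volume.prod ν).prod volume
      = ∫⁻ n, (∫⁻ x, ∫⁻ x', ‖ψ ((R n).symm (x' - x))‖ₑ * ‖f x'‖ₑ) ∂ν := by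
        simp only [enorm_mul, RCLike.enorm_conj]
        rw [lintegral_prod _ hnorm.aemeasurable, lintegral_prod_symm]
        exact hnorm.lintegral_prod_right'.aemeasurable
    _ = ν Set.univ * ((∫⁻ x, ‖ψ x‖ₑ) * ∫⁻ x, ‖f x‖ₑ) := by
        rw [mul_comm, ← lintegral_const]
        refine lintegral_congr fun n => ?_
        rw [lintegral_lintegral_comp_sub_mul (g := fun y => ‖ψ ((R n).symm y)‖ₑ)
          (h := fun y => ‖f y‖ₑ) (by fun_prop) (by fun_prop),
          (R n).symm.measurePreserving.lintegral_comp_emb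
          (R n).symm.toHomeomorph.measurableEmbedding (fun y => ‖ψ y‖ₑ)]
    _ < ∞ := ENNReal.mul_lt_top (measure_lt_top ν _) (ENNReal.mul_lt_top hψ.2 hf.2)

theorem integrable_correlation_rotate_prod (hR : Measurable fun p : Ω × V => (R p.1).symm p.2)
    {ψ f : V → ℂ} (hψ : Integrable ψ) (hf : Integrable f) :
    Integrable (fun p : V × Ω => correlation (ψ ∘ (R p.2).symm) f p.1) (volume.prod ν) := by
  -- the joint measurability of the integrand needs measurable representatives of `ψ` and `f`
  have hmk : ∀ A : V ≃ₗᵢ[ℝ] V,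
      correlation (ψ ∘ A.symm) f = correlation (hψ.1.mk ψ ∘ A.symm) (hf.1.mk f) := fun A =>
    correlation_congr_ae
      (A.symm.measurePreserving.quasiMeasurePreserving.ae_eq_comp hψ.1.ae_eq_mk) hf.1.ae_eq_mk
  simp_rw [hmk]
  exact (integrable_correlation_integrand_rotate hR hψ.1.stronglyMeasurable_mk
    hf.1.stronglyMeasurable_mk (hψ.congr hψ.1.ae_eq_mk) (hf.congr hf.1.ae_eq_mk)).integral_prod_left

theorem Real.fourier_integral_correlation_rotate
    (hR : Measurable fun p : Ω × V => (R p.1).symm p.2) {ψ f : V → ℂ}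
    (hψ : Integrable ψ) (hf : Integrable f) (ξ : V) :
    𝓕 (fun x => ∫ n, correlation (ψ ∘ (R n).symm) f x ∂ν) ξ
      = conj (∫ n, 𝓕 ψ ((R n).symm ξ) ∂ν) * 𝓕 f ξ := by
  rw [Real.fourier_integral_comm (integrable_correlation_rotate_prod hR hψ hf)]
  simp_rw [Real.fourier_correlation ((R _).symm.measurePreserving.integrable_comp_of_integrable hψ)
    hf, Real.fourier_comp_linearIsometry]
  rw [integral_mul_const, integral_conj]

end InnerProductSpace

instance : IsFiniteMeasure σS2 := by
  unfold σS2
  infer_instance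

theorem orientation_integrated_score_fourier_general
    (ψ : R3 → ℂ) (hψ1 : MemLp ψ 1 (volume : Measure R3))
    (Rn : S2 → (R3 ≃ₗᵢ[ℝ] R3))
    (hmeas : Measurable fun p : S2 × R3 => (Rn p.1).symm p.2)
    (f : R3 → ℂ) (hf1 : MemLp f 1 (volume : Measure R3)) :
    ∀ᵐ ω ∂(volume : Measure R3),
      FourierTransform.fourier (fun x => ∫ n, OScore Rn ψ f x n ∂σS2) ω
        = (starRingEnd ℂ) (Npsi Rn ψ ω) * FourierTransform.fourier f ω := by
  exact .of_forall <| Real.fourier_integral_correlation_rotate hmeas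
    (memLp_one_iff_integrable.mp hψ1) (memLp_one_iff_integrable.mp hf1)

/-- The Fourier transform of the orientation-integrated score `A_ψ f` is
`conj(N_ψ(ω)) · 𝓕f(ω)` for a.e. `ω`. -/
theorem orientation_integrated_score_fourier
    (ψ : R3 → ℂ) (hψ1 : MemLp ψ 1 (volume : Measure R3)) (hψ2 : MemLp ψ 2 (volume : Measure R3))
    (Rn : S2 → (R3 ≃ₗᵢ[ℝ] R3))
    (hdet : ∀ n : S2, LinearMap.det ((Rn n).toLinearEquiv : R3 →ₗ[ℝ] R3) = 1)
    (hRez : ∀ n : S2, Rn n ez = (n : R3))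
    (hmeas : Measurable fun p : S2 × R3 => (Rn p.1).symm p.2)
    (f : R3 → ℂ) (hf1 : MemLp f 1 (volume : Measure R3)) (hf2 : MemLp f 2 (volume : Measure R3)) :
    ∀ᵐ ω ∂(volume : Measure R3),
      FourierTransform.fourier (fun x => ∫ n, OScore Rn ψ f x n ∂σS2) ω
        = (starRingEnd ℂ) (Npsi Rn ψ ω) * FourierTransform.fourier f ω :=
  orientation_integrated_score_fourier_general ψ hψ1 Rn hmeas f hf1
end
end
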